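/- arXiv:math/0606247 — 3 statements merged into one kernel-verified Lean document; each statement's English description precedes it below -/
import Mathlib

section
/- Let G be a collineation group of a finite projective plane 𝒫 acting transitively on the points of 𝒫, and let N be a normal subgroup of G. Then N acts faithfully on each of its point orbits: if g ∈ N fixes every point of some N-orbit on the points of 𝒫, then g = 1. -/
/-- A finite projective plane: points, lines, incidence; two distinct points lie on a
unique common line, two distinct lines meet in a unique point, and there exist four
points no three of which are collinear. -/
structure ProjPlane (Pt Ln : Type*) where
  incid : Pt → Ln → Prop
  line_unique : ∀ p q : Pt, p ≠ q → ∃! l : Ln, incid p l ∧ incid q l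
  point_unique : ∀ l m : Ln, l ≠ m → ∃! p : Pt, incid p l ∧ incid p m
  nondeg : ∃ f : Fin 4 → Pt, Function.Injective f ∧
    ∀ l : Ln, ∀ i j k : Fin 4, i ≠ j → j ≠ k → i ≠ k →
      ¬ (incid (f i) l ∧ incid (f j) l ∧ incid (f k) l)

/-- The plane has order `x`: every line has `x+1` points and there are `x²+x+1` points. -/
def ProjPlane.HasOrder {Pt Ln : Type*} (PP : ProjPlane Pt Ln) (x : ℕ) : Prop :=
  (∀ l : Ln, Nat.card {p : Pt // PP.incid p l} = x + 1) ∧ Nat.card Pt = x ^ 2 + x + 1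

/-- `G` is a collineation group of the plane: it acts faithfully on points and acts on
lines preserving incidence. -/
structure IsCollineation {Pt Ln : Type*} (PP : ProjPlane Pt Ln)
    (G : Type*) [Group G] [MulAction G Pt] [MulAction G Ln] : Prop where
  faithful : ∀ g : G, (∀ p : Pt, g • p = p) → g = 1
  preserves : ∀ (g : G) (p : Pt) (l : Ln), PP.incid (g • p) (g • l) ↔ PP.incid p l

/-- A subgroup `S ≤ G` is a Singer group: it acts sharply transitively on points. -/
def IsSinger (Pt : Type*) {G : Type*} [Group G] [MulAction G Pt] (S : Subgroup G) : Prop :=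
  ∀ p q : Pt, ∃! s : G, s ∈ S ∧ s • p = q

set_option linter.unusedSectionVars false

private lemma card_rel {α β : Type*} [Fintype α] [Fintype β] (P : α → β → Prop) :
    Nat.card {ab : α × β // P ab.1 ab.2} = ∑ a : α, Nat.card {b : β // P a b} := by
  classical
  rw [Nat.card_congr (Equiv.subtypeProdEquivSigmaSubtype P), Nat.card_eq_fintype_card,
    Fintype.card_sigma]
  exact Finset.sum_congr rfl (fun a _ => (Nat.card_eq_fintype_card).symm)

private lemma card_rel' {α β : Type*} [Fintype α] [Fintype β] (P : α → β → Prop) :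
    Nat.card {ab : α × β // P ab.1 ab.2} = ∑ b : β, Nat.card {a : α // P a b} := by
  classical
  have : Nat.card {ab : α × β // P ab.1 ab.2} = Nat.card {ba : β × α // P ba.2 ba.1} := by
    apply Nat.card_congr
    exact (Equiv.prodComm α β).subtypeEquiv (fun ab => by simp)
  rw [this]
  exact card_rel (fun b a => P a b)

private lemma card_unique_of_existsUnique {α : Type*} {Q : α → Prop} (h : ∃! a, Q a) :
    Nat.card {a : α // Q a} = 1 := by
  obtain ⟨a, ha, huniq⟩ := h
  have h1 : Nonempty {a : α // Q a} := ⟨⟨a, ha⟩⟩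
  have h2 : Subsingleton {a : α // Q a} :=
    ⟨fun b c => Subtype.ext (by rw [huniq b.1 b.2, huniq c.1 c.2])⟩
  exact Nat.card_unique

private lemma card_empty_of_not {α : Type*} {Q : α → Prop} (h : ∀ a, ¬ Q a) :
    Nat.card {a : α // Q a} = 0 := by
  have : IsEmpty {a : α // Q a} := ⟨fun b => h b.1 b.2⟩
  exact Nat.card_of_isEmpty

section plane
variable {Pt Ln : Type*} [Finite Pt] [Finite Ln] (PP : ProjPlane Pt Ln) {x : ℕ}

private lemma order_pos (horder : PP.HasOrder x) : 1 ≤ x := by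
  obtain ⟨f, hfinj, -⟩ := PP.nondeg
  have h4 : (4 : ℕ) ≤ Nat.card Pt := by
    have := Nat.card_le_card_of_injective f hfinj
    simpa using this
  rw [horder.2] at h4
  by_contra hx
  interval_cases x
  · omega

private lemma exists_not_incid (horder : PP.HasOrder x) (l : Ln) : ∃ u : Pt, ¬ PP.incid u l := by
  by_contra h
  push_neg at h
  have : Nat.card {p : Pt // PP.incid p l} = Nat.card Pt :=
    Nat.card_congr (Equiv.subtypeUnivEquiv h)
  rw [horder.1 l, horder.2] at this
  have hx := order_pos PP horder
  nlinarith

private lemma card_lines_through (horder : PP.HasOrder x) (z : Pt) :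
    Nat.card {l : Ln // PP.incid z l} = x + 1 := by
  classical
  have hFt : Fintype Pt := Fintype.ofFinite Pt
  have hLt : Fintype Ln := Fintype.ofFinite Ln
  have hx := order_pos PP horder
  set P : Pt → Ln → Prop := fun q l => q ≠ z ∧ PP.incid q l ∧ PP.incid z l with hP
  -- count over points
  have c1 : Nat.card {ab : Pt × Ln // P ab.1 ab.2} = x ^ 2 + x := by
    rw [card_rel P]
    have hfib : ∀ q : Pt, Nat.card {l : Ln // P q l} = if q ≠ z then 1 else 0 := by
      intro q
      by_cases hq : q ≠ z
      · rw [if_pos hq]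
        have := PP.line_unique q z hq
        apply card_unique_of_existsUnique
        obtain ⟨l, hl, huniq⟩ := this
        exact ⟨l, ⟨hq, hl⟩, fun m hm => huniq m hm.2⟩
      · rw [if_neg hq]
        exact card_empty_of_not (fun l hl => hq hl.1)
    calc (∑ q : Pt, Nat.card {l : Ln // P q l}) = ∑ q : Pt, if q ≠ z then 1 else 0 :=
          Finset.sum_congr rfl (fun q _ => hfib q)
      _ = (Finset.univ.filter (fun q : Pt => q ≠ z)).card := by
          rw [← Finset.sum_filter (fun q : Pt => q ≠ z) (fun _ => (1:ℕ)),
            Finset.card_eq_sum_ones]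
      _ = (Finset.univ.erase z).card := by
          congr 1
          ext q
          simp [Finset.mem_erase]
      _ = Nat.card Pt - 1 := by
          rw [Finset.card_erase_of_mem (Finset.mem_univ z), Nat.card_eq_fintype_card,
            Finset.card_univ]
      _ = x ^ 2 + x := by rw [horder.2]; omega
  -- count over lines
  have c2 : Nat.card {ab : Pt × Ln // P ab.1 ab.2}
      = (Finset.univ.filter (fun l : Ln => PP.incid z l)).card * x := by
    rw [card_rel' P]
    have hfib : ∀ l : Ln, Nat.card {q : Pt // P q l} = if PP.incid z l then x else 0 := by
      intro l
      by_cases hl : PP.incid z l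
      · rw [if_pos hl]
        have : Nat.card {q : Pt // P q l} = (Finset.univ.filter (fun q : Pt => P q l)).card := by
          rw [Nat.card_eq_fintype_card, Fintype.card_subtype]
        rw [this]
        have heq : (Finset.univ.filter (fun q : Pt => P q l))
            = (Finset.univ.filter (fun q : Pt => PP.incid q l)).erase z := by
          ext q
          simp only [hP, Finset.mem_filter, Finset.mem_erase, Finset.mem_univ, true_and]
          tauto
        rw [heq, Finset.card_erase_of_mem (by simp [hl])]
        have : (Finset.univ.filter (fun q : Pt => PP.incid q l)).card = x + 1 := by
          rw [← Fintype.card_subtype, ← Nat.card_eq_fintype_card]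
          exact horder.1 l
        omega
      · rw [if_neg hl]
        exact card_empty_of_not (fun q hq => hl hq.2.2)
    calc (∑ l : Ln, Nat.card {q : Pt // P q l}) = ∑ l : Ln, if PP.incid z l then x else 0 :=
          Finset.sum_congr rfl (fun l _ => hfib l)
      _ = ∑ l ∈ Finset.univ.filter (fun l : Ln => PP.incid z l), x := Finset.sum_filter _ _ |>.symm
      _ = (Finset.univ.filter (fun l : Ln => PP.incid z l)).card * x := by
          rw [Finset.sum_const, smul_eq_mul]
  have : (Finset.univ.filter (fun l : Ln => PP.incid z l)).card * x = (x + 1) * x := by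
    rw [← c2, c1]; ring
  have hcard : (Finset.univ.filter (fun l : Ln => PP.incid z l)).card = x + 1 :=
    Nat.eq_of_mul_eq_mul_right hx this
  rw [Nat.card_eq_fintype_card, Fintype.card_subtype, hcard]

end plane


section trans
variable {Pt Ln : Type*} [Finite Pt] [Finite Ln] (PP : ProjPlane Pt Ln) {x : ℕ}
  {G : Type*} [Group G] [MulAction G Pt] [MulAction G Ln]

set_option linter.unusedSectionVars false

private lemma line_transitive (horder : PP.HasOrder x) (hcoll : IsCollineation PP G)
    (htrans : ∀ p q : Pt, ∃ g : G, g • p = q) (l l' : Ln) : ∃ h : G, h • l' = l := by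
  classical
  have hFt : Fintype Pt := Fintype.ofFinite Pt
  have hLt : Fintype Ln := Fintype.ofFinite Ln
  have hx := order_pos PP horder
  by_contra hl
  set Orb : Ln → Prop := fun m => ∃ h : G, h • l' = m with hOrb
  set A : Pt → ℕ := fun u => Nat.card {m : Ln // Orb m ∧ PP.incid u m} with hA
  -- A is constant
  have hAconst : ∀ u v : Pt, A u = A v := by
    intro u v
    obtain ⟨h, rfl⟩ := htrans u v
    apply Nat.card_congr
    refine ⟨fun m => ⟨h • m.1, ?_, ?_⟩, fun m => ⟨h⁻¹ • m.1, ?_, ?_⟩, ?_, ?_⟩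
    · obtain ⟨h', hh'⟩ := m.2.1; exact ⟨h * h', by rw [mul_smul, hh']⟩
    · exact (hcoll.preserves h u m.1).mpr m.2.2
    · obtain ⟨h', hh'⟩ := m.2.1; exact ⟨h⁻¹ * h', by rw [mul_smul, hh']⟩
    · have := (hcoll.preserves h⁻¹ (h • u) m.1).mpr m.2.2
      rwa [inv_smul_smul] at this
    · intro m; ext; simp
    · intro m; ext; simp
  -- base point on l'
  have hpos : 0 < Nat.card {q : Pt // PP.incid q l'} := by rw [horder.1 l']; omega
  obtain ⟨u₀⟩ := (Nat.card_pos_iff.mp hpos).1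
  have hApos : 1 ≤ A u₀ := by
    have : Nonempty {m : Ln // Orb m ∧ PP.incid (u₀ : Pt) m} :=
      ⟨⟨l', ⟨1, one_smul _ _⟩, u₀.2⟩⟩
    exact Nat.card_pos_iff.mpr ⟨this, inferInstance⟩
  set LC : ℕ := (Finset.univ.filter (fun m : Ln => Orb m)).card with hLC
  -- first double count : flags (m, u) with m in orbit, u on m
  have c12 : LC * (x + 1) = Nat.card Pt * A u₀ := by
    have c1 : Nat.card {mu : Ln × Pt // Orb mu.1 ∧ PP.incid mu.2 mu.1} = LC * (x + 1) := by
      rw [card_rel (fun (m : Ln) (u : Pt) => Orb m ∧ PP.incid u m)]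
      have hfib : ∀ m : Ln, Nat.card {u : Pt // Orb m ∧ PP.incid u m}
          = if Orb m then x + 1 else 0 := by
        intro m
        by_cases hm : Orb m
        · rw [if_pos hm]
          have he : Nat.card {u : Pt // Orb m ∧ PP.incid u m} = Nat.card {u : Pt // PP.incid u m} :=
            Nat.card_congr (Equiv.subtypeEquivRight (fun u => and_iff_right hm))
          rw [he]
          exact horder.1 m
        · rw [if_neg hm]
          exact card_empty_of_not (fun u hu => hm hu.1)
      calc (∑ m : Ln, Nat.card {u : Pt // Orb m ∧ PP.incid u m})
          = ∑ m : Ln, if Orb m then x + 1 else 0 := Finset.sum_congr rfl (fun m _ => hfib m)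
        _ = ∑ m ∈ Finset.univ.filter (fun m : Ln => Orb m), (x + 1) :=
            (Finset.sum_filter _ _).symm
        _ = LC * (x + 1) := by rw [Finset.sum_const, smul_eq_mul, hLC]
    have c2 : Nat.card {mu : Ln × Pt // Orb mu.1 ∧ PP.incid mu.2 mu.1}
        = Nat.card Pt * A u₀ := by
      rw [card_rel' (fun (m : Ln) (u : Pt) => Orb m ∧ PP.incid u m)]
      calc (∑ u : Pt, Nat.card {m : Ln // Orb m ∧ PP.incid u m})
          = ∑ _u : Pt, A u₀ := Finset.sum_congr rfl (fun u _ => hAconst u u₀)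
        _ = Nat.card Pt * A u₀ := by
            rw [Finset.sum_const, smul_eq_mul, Nat.card_eq_fintype_card, Finset.card_univ]
    rw [← c1, c2]
  -- second double count : flags (m, u) with m in orbit, u on m and on l
  have c34 : LC = (x + 1) * A u₀ := by
    have c3 : Nat.card {mu : Ln × Pt // Orb mu.1 ∧ PP.incid mu.2 mu.1 ∧ PP.incid mu.2 l}
        = LC := by
      rw [card_rel (fun (m : Ln) (u : Pt) => Orb m ∧ PP.incid u m ∧ PP.incid u l)]
      have hfib : ∀ m : Ln, Nat.card {u : Pt // Orb m ∧ PP.incid u m ∧ PP.incid u l}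
          = if Orb m then 1 else 0 := by
        intro m
        by_cases hm : Orb m
        · rw [if_pos hm]
          have hml : m ≠ l := fun he => hl (he ▸ hm)
          obtain ⟨w, hw, huniq⟩ := PP.point_unique m l hml
          exact card_unique_of_existsUnique
            ⟨w, ⟨hm, hw⟩, fun u hu => huniq u hu.2⟩
        · rw [if_neg hm]
          exact card_empty_of_not (fun u hu => hm hu.1)
      calc (∑ m : Ln, Nat.card {u : Pt // Orb m ∧ PP.incid u m ∧ PP.incid u l})
          = ∑ m : Ln, if Orb m then 1 else 0 := Finset.sum_congr rfl (fun m _ => hfib m)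
        _ = ∑ m ∈ Finset.univ.filter (fun m : Ln => Orb m), 1 := (Finset.sum_filter _ _).symm
        _ = LC := by rw [Finset.sum_const, smul_eq_mul, hLC, mul_one]
    have c4 : Nat.card {mu : Ln × Pt // Orb mu.1 ∧ PP.incid mu.2 mu.1 ∧ PP.incid mu.2 l}
        = (x + 1) * A u₀ := by
      rw [card_rel' (fun (m : Ln) (u : Pt) => Orb m ∧ PP.incid u m ∧ PP.incid u l)]
      have hfib : ∀ u : Pt, Nat.card {m : Ln // Orb m ∧ PP.incid u m ∧ PP.incid u l}
          = if PP.incid u l then A u₀ else 0 := by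
        intro u
        by_cases hu : PP.incid u l
        · rw [if_pos hu]
          have he : Nat.card {m : Ln // Orb m ∧ PP.incid u m ∧ PP.incid u l}
              = Nat.card {m : Ln // Orb m ∧ PP.incid u m} :=
            Nat.card_congr (Equiv.subtypeEquivRight (fun m => by tauto))
          rw [he]
          exact hAconst u u₀
        · rw [if_neg hu]
          exact card_empty_of_not (fun m hm => hu hm.2.2)
      calc (∑ u : Pt, Nat.card {m : Ln // Orb m ∧ PP.incid u m ∧ PP.incid u l})
          = ∑ u : Pt, if PP.incid u l then A u₀ else 0 :=
            Finset.sum_congr rfl (fun u _ => hfib u)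
        _ = ∑ u ∈ Finset.univ.filter (fun u : Pt => PP.incid u l), A u₀ :=
            (Finset.sum_filter _ _).symm
        _ = (Finset.univ.filter (fun u : Pt => PP.incid u l)).card * A u₀ := by
            rw [Finset.sum_const, smul_eq_mul]
        _ = (x + 1) * A u₀ := by
            congr 1
            rw [← Fintype.card_subtype, ← Nat.card_eq_fintype_card]
            exact horder.1 l
    rw [← c3, c4]
  rw [horder.2] at c12
  rw [c34] at c12
  nlinarith [hApos, hx, c12]

end trans

/-- A normal subgroup of a point-transitive collineation group acts faithfully on each
of its point orbits. -/
theorem stmt_1 {Pt Ln : Type*} [Finite Pt] [Finite Ln] (PP : ProjPlane Pt Ln)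
    (x : ℕ) (horder : PP.HasOrder x)
    {G : Type*} [Group G] [MulAction G Pt] [MulAction G Ln]
    (hcoll : IsCollineation PP G)
    (htrans : ∀ p q : Pt, ∃ g : G, g • p = q)
    (N : Subgroup G) (hN : N.Normal) :
    ∀ g ∈ N, (∃ p : Pt, ∀ n ∈ N, g • (n • p) = n • p) → g = 1 := by
  classical
  intro g hgN hfix
  obtain ⟨p, hp⟩ := hfix
  haveI hGfin : Finite G := by
    refine Finite.of_injective (fun a : G => (fun q : Pt => a • q)) ?_
    intro a b hab
    have hfixall : ∀ q : Pt, (b⁻¹ * a) • q = q := by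
      intro q
      have h1 := congrFun hab q
      simp only at h1
      rw [mul_smul, h1, inv_smul_smul]
    have h2 := hcoll.faithful _ hfixall
    have h3 : b = a := by
      have := congrArg (fun y => b * y) h2
      simpa [mul_assoc] using this.symm
    exact h3.symm
  by_cases hcase : ∀ n ∈ N, n • p = p
  · apply hcoll.faithful
    intro q
    obtain ⟨h, rfl⟩ := htrans p q
    have hmem : h⁻¹ * g * h ∈ N := by
      have := hN.conj_mem g hgN h⁻¹
      rwa [inv_inv] at this
    have hfixp := hcase _ hmem
    have e1 : g • h • p = h • ((h⁻¹ * g * h) • p) := by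
      rw [← mul_smul, ← mul_smul]; congr 1; group
    rw [e1, hfixp]
  · push_neg at hcase
    obtain ⟨n₀, hn₀N, hn₀⟩ := hcase
    set Ks : Pt → Set G := fun z => {n : G | n ∈ N ∧ ∀ n' ∈ N, n • (n' • z) = n' • z} with hKs
    set F : Set Pt := {u : Pt | ∀ k ∈ Ks p, k • u = u} with hF
    -- closure of kernels under conjugation by elements of N
    have hKconjN : ∀ (z : Pt) (n' : G), n' ∈ N → ∀ k ∈ Ks z, n'⁻¹ * k * n' ∈ Ks z := by
      intro z n' hn' k hk
      refine ⟨?_, ?_⟩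
      · have := hN.conj_mem k hk.1 n'⁻¹
        rwa [inv_inv] at this
      · intro m hm
        have key := hk.2 (n' * m) (N.mul_mem hn' hm)
        have e1 : (n'⁻¹ * k * n') • (m • z) = n'⁻¹ • (k • ((n' * m) • z)) := by
          rw [← mul_smul, ← mul_smul, ← mul_smul]; congr 1; group
        rw [e1, key, ← mul_smul]
        congr 1; group
    -- transporting kernels along the action
    have hKdir : ∀ (h : G) (z : Pt) (n : G), h⁻¹ * n * h ∈ Ks z → n ∈ Ks (h • z) := by
      intro h z n hm
      obtain ⟨hmN, hmfix⟩ := hm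
      refine ⟨?_, ?_⟩
      · have h1 := hN.conj_mem _ hmN h
        have e : h * (h⁻¹ * n * h) * h⁻¹ = n := by group
        rwa [e] at h1
      · intro n' hn'
        have hc : h⁻¹ * n' * h ∈ N := by
          have := hN.conj_mem n' hn' h⁻¹
          rwa [inv_inv] at this
        have key := hmfix _ hc
        have e1 : n' • (h • z) = h • ((h⁻¹ * n' * h) • z) := by
          rw [← mul_smul, ← mul_smul]; congr 1; group
        rw [e1]
        have e2 : n • (h • ((h⁻¹ * n' * h) • z)) = h • ((h⁻¹ * n * h) • ((h⁻¹ * n' * h) • z)) := by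
          rw [← mul_smul, ← mul_smul, ← mul_smul, ← mul_smul]; congr 1; group
      
        rw [e2, key]
    have hKimage : ∀ (h : G) (z : Pt), Ks (h • z) = (fun n : G => h * n * h⁻¹) '' Ks z := by
      intro h z
      ext n
      constructor
      · intro hn
        refine ⟨h⁻¹ * n * h, ?_, by group⟩
        have : z = h⁻¹ • (h • z) := (inv_smul_smul h z).symm
        rw [this]
        apply hKdir h⁻¹ (h • z)
        have e : h⁻¹⁻¹ * (h⁻¹ * n * h) * h⁻¹ = n := by group
        rwa [e]
      · rintro ⟨k', hk', rfl⟩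
        apply hKdir h z
        have e : h⁻¹ * (h * k' * h⁻¹) * h = k' := by group
        rwa [e]
    have hKncard : ∀ z : Pt, (Ks z).ncard = (Ks p).ncard := by
      intro z
      obtain ⟨h, rfl⟩ := htrans p z
      rw [hKimage h p]
      apply Set.ncard_image_of_injective
      intro a b e
      have := congrArg (fun y => h⁻¹ * y * h) e
      have ea : h⁻¹ * (h * a * h⁻¹) * h = a := by group
      have eb : h⁻¹ * (h * b * h⁻¹) * h = b := by group
      simp only at this
      rw [ea, eb] at this
      exact this
    have hKsub : ∀ (z w : Pt), (∀ k ∈ Ks w, k • z = z) → Ks w ⊆ Ks z := by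
      intro z w hzw k hk
      refine ⟨hk.1, ?_⟩
      intro n' hn'
      have hc := hKconjN w n' hn' k hk
      have hfixz := hzw _ hc
      have e2 : k • (n' • z) = n' • ((n'⁻¹ * k * n') • z) := by
        rw [← mul_smul, ← mul_smul]; congr 1; group
      rw [e2, hfixz]
    have hKeq : ∀ (z w : Pt), (∀ k ∈ Ks w, k • z = z) → Ks w = Ks z := by
      intro z w hzw
      refine Set.eq_of_subset_of_ncard_le (hKsub z w hzw) ?_ (Set.toFinite _)
      rw [hKncard z, hKncard w]
    -- F is a union of N-orbits
    have hForbit : ∀ u ∈ F, ∀ k : G, k ∈ N → k • u ∈ F := by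
      intro u huF k hkN k' hk'
      have hc := hKconjN p k hkN k' hk'
      have hfixu := huF _ hc
      have e2 : k' • (k • u) = k • ((k⁻¹ * k' * k) • u) := by
        rw [← mul_smul, ← mul_smul]; congr 1; group
      rw [e2, hfixu]
    have hpF : p ∈ F := by
      intro k hk
      have := hk.2 1 N.one_mem
      simpa using this
    have hbF : (n₀ • p) ∈ F := fun k hk => hk.2 n₀ hn₀N
    have hab : p ≠ n₀ • p := fun e => hn₀ e.symm
    -- stable lines and fixed intersection points
    have hline : ∀ {k : G} {a b : Pt} {l : Ln}, a ≠ b → PP.incid a l → PP.incid b l →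
        k • a = a → k • b = b → k • l = l := by
      intro k a b l hab' hal hbl hka hkb
      obtain ⟨m, hm, huniq⟩ := PP.line_unique a b hab'
      have h1 : l = m := huniq l ⟨hal, hbl⟩
      have h2 : k • l = m := by
        apply huniq
        constructor
        · have := (hcoll.preserves k a l).mpr hal; rwa [hka] at this
        · have := (hcoll.preserves k b l).mpr hbl; rwa [hkb] at this
      rw [h2, ← h1]
    have hmeet : ∀ {k : G} {l m : Ln} {z : Pt}, l ≠ m → k • l = l → k • m = m →
        PP.incid z l → PP.incid z m → k • z = z := by
      intro k l m z hlm hkl hkm hzl hzm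
      obtain ⟨w, hw, huniq⟩ := PP.point_unique l m hlm
      have h1 : z = w := huniq z ⟨hzl, hzm⟩
      have h2 : k • z = w := by
        apply huniq
        constructor
        · have := (hcoll.preserves k z l).mpr hzl; rwa [hkl] at this
        · have := (hcoll.preserves k z m).mpr hzm; rwa [hkm] at this
      rw [h2, ← h1]
    -- every line through a point of F contains a second point of F
    have hsecond : ∀ (l : Ln) (q : Pt), PP.incid q l → q ∈ F →
        ∃ d : Pt, PP.incid d l ∧ d ∈ F ∧ d ≠ q := by
      intro l q hql hqF
      obtain ⟨l₀, ⟨hpl₀, hbl₀⟩, hl₀uniq⟩ := PP.line_unique p (n₀ • p) hab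
      obtain ⟨h, hhl⟩ := line_transitive PP horder hcoll htrans l l₀
      have hhp : PP.incid (h • p) l := by
        rw [← hhl]; exact (hcoll.preserves h p l₀).mpr hpl₀
      have hhb : PP.incid (h • (n₀ • p)) l := by
        rw [← hhl]; exact (hcoll.preserves h (n₀ • p) l₀).mpr hbl₀
      have hhab : h • p ≠ h • (n₀ • p) := fun e => hab (MulAction.injective h e)
      have hFmap : ∀ u ∈ F, ∀ k ∈ Ks (h • p), k • (h • u) = h • u := by
        intro u huF k hk
        rw [hKimage h p] at hk
        obtain ⟨k', hk', rfl⟩ := hk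
        have e : (h * k' * h⁻¹) • (h • u) = h • (k' • u) := by
          rw [← mul_smul, ← mul_smul]; congr 1; group
        rw [e, huF k' hk']
      by_cases hq2 : ∀ k ∈ Ks (h • p), k • q = q
      · have e1 : Ks (h • p) = Ks q := hKeq q (h • p) hq2
        have e2 : Ks p = Ks q := hKeq q p (fun k hk => hqF k hk)
        have e3 : Ks (h • p) = Ks p := e1.trans e2.symm
        have hhpF : (h • p) ∈ F := by
          intro k hk
          exact hFmap p hpF k (by rw [e3]; exact hk)
        have hhbF : (h • (n₀ • p)) ∈ F := by
          intro k hk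
          exact hFmap (n₀ • p) hbF k (by rw [e3]; exact hk)
        by_cases he : h • p = q
        · exact ⟨h • (n₀ • p), hhb, hhbF, fun e => hhab (he ▸ e.symm ▸ rfl)⟩
        · exact ⟨h • p, hhp, hhpF, he⟩
      · push_neg at hq2
        obtain ⟨k, hkK, hkq⟩ := hq2
        have hfix1 : k • (h • p) = h • p := hFmap p hpF k hkK
        have hfix2 : k • (h • (n₀ • p)) = h • (n₀ • p) := hFmap (n₀ • p) hbF k hkK
        have hkl : k • l = l := hline hhab hhp hhb hfix1 hfix2
        have hkN : k ∈ N := hkK.1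
        refine ⟨k • q, ?_, hForbit q hqF k hkN, hkq⟩
        have := (hcoll.preserves k q l).mpr hql
        rwa [hkl] at this
    -- filling up a line with two F-points given an F-point off it
    have hSfill : ∀ (l : Ln) (a b c : Pt), PP.incid a l → PP.incid b l → a ≠ b →
        a ∈ F → b ∈ F → c ∈ F → ¬ PP.incid c l → ∀ z, PP.incid z l → z ∈ F := by
      intro l a b c hal hbl hab' haF hbF' hcF hcl z hzl
      have hcz : c ≠ z := fun e => hcl (e ▸ hzl)
      obtain ⟨t, ⟨hct, hzt⟩, htuniq⟩ := PP.line_unique c z hcz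
      obtain ⟨d, hdt, hdF, hdc⟩ := hsecond t c hct hcF
      have hlt : l ≠ t := fun e => hcl (e ▸ hct)
      intro k hk
      have hkl : k • l = l := hline hab' hal hbl (haF k hk) (hbF' k hk)
      have hkt : k • t = t := hline (Ne.symm hdc) hct hdt (hcF k hk) (hdF k hk)
      exact hmeet hlt hkl hkt hzl hzt
    obtain ⟨l₀, ⟨hpl₀, hbl₀⟩, hl₀uniq⟩ := PP.line_unique p (n₀ • p) hab
    -- an F-point off l₀
    obtain ⟨u, hu⟩ := exists_not_incid PP horder l₀
    have hpu : p ≠ u := fun e => hu (e ▸ hpl₀)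
    obtain ⟨t, ⟨hpt, hut⟩, htuniq⟩ := PP.line_unique p u hpu
    obtain ⟨c, hct, hcF, hcp⟩ := hsecond t p hpt hpF
    have hcl₀ : ¬ PP.incid c l₀ := by
      intro hcl
      have htl : t ≠ l₀ := fun e => hu (e ▸ hut)
      obtain ⟨w, hw, hwuniq⟩ := PP.point_unique t l₀ htl
      have e1 : c = w := hwuniq c ⟨hct, hcl⟩
      have e2 : p = w := hwuniq p ⟨hpt, hpl₀⟩
      exact hcp (e1.trans e2.symm)
    have hl₀F : ∀ z, PP.incid z l₀ → z ∈ F :=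
      hSfill l₀ p (n₀ • p) c hpl₀ hbl₀ hab hpF hbF hcF hcl₀
    -- every point is in F
    have hall : ∀ w : Pt, w ∈ F := by
      intro w
      by_cases hwl : PP.incid w l₀
      · exact hl₀F w hwl
      · have hwp : w ≠ p := fun e => hwl (e ▸ hpl₀)
        obtain ⟨m, ⟨hwm, hpm⟩, hmuniq⟩ := PP.line_unique w p hwp
        obtain ⟨a₂, ha₂m, ha₂F, ha₂p⟩ := hsecond m p hpm hpF
        have hbm : ¬ PP.incid (n₀ • p) m := by
          intro hbm'
          have hml : m ≠ l₀ := fun e => hwl (e ▸ hwm)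
          obtain ⟨w', hw', hwuniq⟩ := PP.point_unique m l₀ hml
          have e1 : (n₀ • p) = w' := hwuniq _ ⟨hbm', hbl₀⟩
          have e2 : p = w' := hwuniq _ ⟨hpm, hpl₀⟩
          exact hab (e2.trans e1.symm)
        exact hSfill m p a₂ (n₀ • p) hpm ha₂m (Ne.symm ha₂p) hpF ha₂F hbF hbm w hwm
    apply hcoll.faithful
    intro u'
    exact hall u' g ⟨hgN, hp⟩
end

section
/- Let 𝒫 be a finite projective plane with collineation group G, let S ≤ G be an abelian Singer group of 𝒫, and let Q ≤ G be a subgroup normalized by S. If the order of Q is coprime to the order of S, then S centralizes Q. -/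
/-!
Since `S` normalizes `Q`, each `Q`-orbit is a block for the transitive group `S`, so its size
divides the number of points, which is `|S|`; it also divides `|Q|`. Coprimality makes every
`Q`-orbit a single point, and as the action on points is faithful, `Q` is trivial.
-/

open MulAction Pointwise

section CoprimeNormalizedSubgroup

variable {G X : Type*} [Group G] [MulAction G X]

theorem smul_orbit_eq_orbit_smul_of_mem_normalizer {Q : Subgroup G} {g : G}
    (hg : g ∈ Subgroup.normalizer Q) (a : X) : g • orbit Q a = orbit Q (g • a) := by
  ext b
  constructor
  · rintro ⟨_, ⟨q, rfl⟩, rfl⟩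
    refine ⟨⟨g * q * g⁻¹, (Subgroup.mem_normalizer_iff.mp hg q).mp q.2⟩, ?_⟩
    simp [mul_smul, Subgroup.smul_def]
  · rintro ⟨q, rfl⟩
    refine ⟨(g⁻¹ * q * g) • a, ⟨⟨_, (Subgroup.mem_normalizer_iff''.mp hg q).mp q.2⟩, rfl⟩, ?_⟩
    simp [mul_smul, Subgroup.smul_def]

theorem isBlock_orbit_of_le_normalizer {S Q : Subgroup G} (hSQ : S ≤ Subgroup.normalizer Q)
    (a : X) : IsBlock S (orbit Q a) := by
  rw [isBlock_iff_smul_eq_or_disjoint]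
  intro s
  change (s : G) • orbit Q a = _ ∨ Disjoint ((s : G) • orbit Q a) _
  rw [smul_orbit_eq_orbit_smul_of_mem_normalizer (hSQ s.2)]
  exact orbit.eq_or_disjoint _ _

theorem smul_eq_self_of_coprime_card {S Q : Subgroup G} [IsPretransitive S X]
    (hSQ : S ≤ Subgroup.normalizer Q) (hcop : (Nat.card Q).Coprime (Nat.card X))
    {q : G} (hq : q ∈ Q) (a : X) : q • a = a := by
  have hdvd_Q : (orbit Q a).ncard ∣ Nat.card Q :=
    index_stabilizer Q a ▸ Subgroup.index_dvd_card _
  have hdvd_X : (orbit Q a).ncard ∣ Nat.card X :=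
    (isBlock_orbit_of_le_normalizer hSQ a).ncard_dvd_card ⟨a, mem_orbit_self a⟩
  obtain ⟨b, hb⟩ := Set.ncard_eq_one.mp (Nat.eq_one_of_dvd_coprimes hcop hdvd_Q hdvd_X)
  have hqa : q • a ∈ orbit Q a := ⟨⟨q, hq⟩, rfl⟩
  have ha : a ∈ orbit Q a := mem_orbit_self a
  rw [hb, Set.mem_singleton_iff] at hqa ha
  rw [hqa, ha]

end CoprimeNormalizedSubgroup

theorem Subgroup.le_normalizer_of_conj_mem {G : Type*} [Group G] {S Q : Subgroup G}
    (h : ∀ s ∈ S, ∀ q ∈ Q, s * q * s⁻¹ ∈ Q) : S ≤ Subgroup.normalizer Q := fun s hs =>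
  Subgroup.mem_normalizer_iff.mpr fun q =>
    ⟨h s hs q, fun hq => by simpa [mul_assoc] using h s⁻¹ (inv_mem hs) _ hq⟩

namespace IsSinger

variable {X G : Type*} [Group G] [MulAction G X] {S : Subgroup G}

theorem isPretransitive (hS : IsSinger X S) : IsPretransitive S X :=
  ⟨fun p q => let ⟨s, ⟨hs, hsp⟩, _⟩ := hS p q; ⟨⟨s, hs⟩, hsp⟩⟩

theorem natCard_eq (hS : IsSinger X S) (p : X) : Nat.card S = Nat.card X := by
  refine Nat.card_eq_of_bijective (fun s : S => (s : G) • p) ⟨fun a b hab => ?_, fun q => ?_⟩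
  · obtain ⟨s, -, huniq⟩ := hS p ((a : G) • p)
    exact Subtype.ext ((huniq a ⟨a.2, rfl⟩).trans (huniq b ⟨b.2, hab.symm⟩).symm)
  · obtain ⟨s, ⟨hs, hsp⟩, -⟩ := hS p q
    exact ⟨⟨s, hs⟩, hsp⟩

end IsSinger

theorem stmt_5_general {Pt Ln : Type*} (PP : ProjPlane Pt Ln)
    {G : Type*} [Group G] [MulAction G Pt] [MulAction G Ln]
    (hcoll : IsCollineation PP G)
    (S : Subgroup G) (hSinger : IsSinger Pt S)
    (Q : Subgroup G) (hnorm : ∀ s ∈ S, ∀ q ∈ Q, s * q * s⁻¹ ∈ Q)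
    (hcop : Nat.Coprime (Nat.card Q) (Nat.card S)) :
    ∀ s ∈ S, ∀ q ∈ Q, s * q = q * s := by
  intro s _ q hq
  have := hSinger.isPretransitive
  obtain rfl : q = 1 := hcoll.faithful q fun p =>
    smul_eq_self_of_coprime_card (Subgroup.le_normalizer_of_conj_mem hnorm)
      (hSinger.natCard_eq p ▸ hcop) hq p
  rw [mul_one, one_mul]

/-- An abelian Singer group centralizes every subgroup of coprime order that it
normalizes. -/
theorem stmt_5 {Pt Ln : Type*} [Finite Pt] [Finite Ln] (PP : ProjPlane Pt Ln)
    (x : ℕ) (horder : PP.HasOrder x)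
    {G : Type*} [Group G] [MulAction G Pt] [MulAction G Ln]
    (hcoll : IsCollineation PP G)
    (S : Subgroup G) (hSinger : IsSinger Pt S)
    (hSab : ∀ a ∈ S, ∀ b ∈ S, a * b = b * a)
    (Q : Subgroup G) (hnorm : ∀ s ∈ S, ∀ q ∈ Q, s * q * s⁻¹ ∈ Q)
    (hcop : Nat.Coprime (Nat.card Q) (Nat.card S)) :
    ∀ s ∈ S, ∀ q ∈ Q, s * q = q * s :=
  stmt_5_general PP hcoll S hSinger Q hnorm hcop
end

section
/- Let H be a finite group, p a prime, P a normal p-subgroup of H, and S a nilpotent subgroup of H such that H = SP (every element of H can be written as sp with s ∈ S, p ∈ P). Let P₁ be the unique Sylow p-subgroup of the nilpotent group S. Then Q = P·P₁ is a subgroup of H, Q is normal in H, and Q is a Sylow p-subgroup of H. -/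
open scoped Pointwise

/-- If `H = SP` with `P` a normal `p`-subgroup and `S` nilpotent, and `P₁` is the unique
Sylow `p`-subgroup of `S`, then `P·P₁` is a normal Sylow `p`-subgroup of `H`. -/
theorem stmt_15 {H : Type*} [Group H] [Finite H] (p : ℕ) (hp : p.Prime)
    (P : Subgroup H) (hPnorm : P.Normal) (hPp : IsPGroup p P)
    (S : Subgroup H) (hSnilp : Group.IsNilpotent S)
    (hHSP : ∀ h : H, ∃ s ∈ S, ∃ q ∈ P, h = s * q)
    (P₁ : Subgroup H) (hP₁le : P₁ ≤ S) (hP₁p : IsPGroup p P₁)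
    (hP₁max : ∀ K : Subgroup H, K ≤ S → IsPGroup p K → K ≤ P₁) :
    ∃ Q : Sylow p H, ((Q : Subgroup H) : Set H) = (P : Set H) * (P₁ : Set H) ∧
      (Q : Subgroup H).Normal := by
  haveI := hPnorm
  set Q : Subgroup H := P ⊔ P₁ with hQdef
  have hQp : IsPGroup p Q := IsPGroup.to_sup_of_normal_left hPp hP₁p
  -- maximality
  have hmax : ∀ {K : Subgroup H}, IsPGroup p K → Q ≤ K → K = Q := by
    intro K hKp hQK
    refine le_antisymm ?_ hQK
    intro x hx
    obtain ⟨s, hs, q, hq, rfl⟩ := hHSP x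
    have hqK : q ∈ K := hQK (le_sup_left (a := P) (b := P₁) hq)
    have hsK : s ∈ K := by
      have : s * q * q⁻¹ ∈ K := mul_mem hx (inv_mem hqK)
      simpa using this
    have hsP₁ : s ∈ P₁ := by
      have h1 : (K ⊓ S) ≤ S := inf_le_right
      have h2 : IsPGroup p (K ⊓ S : Subgroup H) :=
        hKp.to_le inf_le_left
      exact hP₁max _ h1 h2 ⟨hsK, hs⟩
    exact mul_mem (le_sup_right (a := P) (b := P₁) hsP₁) (le_sup_left (a := P) (b := P₁) hq)
  have hQnorm : Q.Normal := by
    constructor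
    intro n hn g
    obtain ⟨s, hs, q, hq, rfl⟩ := hHSP g
    -- conjugation by s maps Q into Q
    have hconjle : (MulAut.conj s) • P₁ ≤ P₁ := by
      apply hP₁max
      · intro y hy
        obtain ⟨z, hz, rfl⟩ := hy
        exact mul_mem (mul_mem hs (hP₁le hz)) (inv_mem hs)
      · exact hP₁p.map _
    have hsconj : ∀ m ∈ Q, s * m * s⁻¹ ∈ Q := by
      intro m hm
      have hm' : m ∈ ((P : Set H) * (P₁ : Set H)) := by
        rw [← Subgroup.normal_mul]; exact hm
      obtain ⟨a, ha, b, hb, rfl⟩ := hm'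
      have h1 : s * a * s⁻¹ ∈ P := hPnorm.conj_mem a ha s
      have h2 : s * b * s⁻¹ ∈ P₁ := hconjle ⟨b, hb, rfl⟩
      have : (s * a * s⁻¹) * (s * b * s⁻¹) ∈ Q :=
        mul_mem (le_sup_left (a := P) (b := P₁) h1) (le_sup_right (a := P) (b := P₁) h2)
      simpa [mul_assoc] using this
    have hq' : (q : H) ∈ Q := le_sup_left (a := P) (b := P₁) hq
    have step1 : q * n * q⁻¹ ∈ Q := mul_mem (mul_mem hq' hn) (inv_mem hq')
    have step2 : s * (q * n * q⁻¹) * s⁻¹ ∈ Q := hsconj _ step1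
    simpa [mul_assoc] using step2
  refine ⟨⟨Q, hQp, fun {K} hK hQK => hmax hK hQK⟩, ?_, hQnorm⟩
  simpa using Subgroup.normal_mul P P₁
end
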